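/- arXiv:2207.02045 — 2 statements merged into one kernel-verified Lean document; each statement's English description precedes it below -/
import Mathlib

section
/- If S, S', S'' are finite, μ R^# μ' and μ' Q^# μ'', then μ (Q ∘ R)^# μ'', where Q ∘ R = {(s, s'') | ∃ s'. (s,s') ∈ R ∧ (s',s'') ∈ Q}. -/
open scoped ENNReal

/-- `w` is a coupling for `(μ, μ')`: its left marginal is `μ` and its right marginal is `μ'`. -/
def IsCoupling {S S' : Type*} (w : PMF (S × S')) (μ : PMF S) (μ' : PMF S') : Prop :=
  (∀ s, ∑' s', w (s, s') = μ s) ∧ (∀ s', ∑' s, w (s, s') = μ' s')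

/-- The lifting `R^#` of a relation to distributions. -/
def Lift {S S' : Type*} (R : S → S' → Prop) (μ : PMF S) (μ' : PMF S') : Prop :=
  ∃ w : PMF (S × S'), IsCoupling w μ μ' ∧ ∀ s s', 0 < w (s, s') → R s s'

/-- Lifting preserves relational composition (for finite state spaces): if `μ R^# μ'`
and `μ' Q^# μ''` then `μ (Q ∘ R)^# μ''`, where
`Q ∘ R = {(s, s'') | ∃ s'. (s,s') ∈ R ∧ (s',s'') ∈ Q}`. -/
theorem lift_comp {S S' S'' : Type*} [Fintype S] [Fintype S'] [Fintype S'']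
    (R : S → S' → Prop) (Q : S' → S'' → Prop)
    (μ : PMF S) (μ' : PMF S') (μ'' : PMF S'')
    (h₁ : Lift R μ μ') (h₂ : Lift Q μ' μ'') :
    Lift (fun s s'' => ∃ s', R s s' ∧ Q s' s'') μ μ'' := by
  obtain ⟨w₁, ⟨hl₁, hr₁⟩, hs₁⟩ := h₁
  obtain ⟨w₂, ⟨hl₂, hr₂⟩, hs₂⟩ := h₂
  set f : S × S'' → ℝ≥0∞ := fun p => ∑' s', w₁ (p.1, s') * (w₂ (s', p.2) / μ' s') with hf
  have hnt : ∀ s', μ' s' ≠ ⊤ := fun s' => PMF.apply_ne_top μ' s'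
  have h0₁ : ∀ s s', μ' s' = 0 → w₁ (s, s') = 0 := by
    intro s s' h
    have hle : w₁ (s, s') ≤ μ' s' := (hr₁ s') ▸ ENNReal.le_tsum s
    exact le_antisymm (h ▸ hle) zero_le
  have h0₂ : ∀ s' s'', μ' s' = 0 → w₂ (s', s'') = 0 := by
    intro s' s'' h
    have hle : w₂ (s', s'') ≤ μ' s' := (hl₂ s') ▸ ENNReal.le_tsum s''
    exact le_antisymm (h ▸ hle) zero_le
  -- left marginal
  have hA : ∀ s, ∑' s'', f (s, s'') = μ s := by
    intro s
    have : ∑' s'', f (s, s'') = ∑' s', ∑' s'', w₁ (s, s') * (w₂ (s', s'') / μ' s') :=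
      ENNReal.tsum_comm
    rw [this, ← hl₁ s]
    refine tsum_congr fun s' => ?_
    simp only [div_eq_mul_inv]
    rw [ENNReal.tsum_mul_left, ENNReal.tsum_mul_right, hl₂ s']
    by_cases h : μ' s' = 0
    · simp [h0₁ s s' h]
    · rw [ENNReal.mul_inv_cancel h (hnt s'), mul_one]
  -- right marginal
  have hB : ∀ s'', ∑' s, f (s, s'') = μ'' s'' := by
    intro s''
    have : ∑' s, f (s, s'') = ∑' s', ∑' s, w₁ (s, s') * (w₂ (s', s'') / μ' s') :=
      ENNReal.tsum_comm
    rw [this, ← hr₂ s'']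
    refine tsum_congr fun s' => ?_
    rw [ENNReal.tsum_mul_right, hr₁ s']
    by_cases h : μ' s' = 0
    · simp [h0₂ s' s'' h]
    · rw [← mul_div_assoc, mul_comm, mul_div_assoc, ENNReal.div_self h (hnt s'), mul_one]
  have htot : ∑' p, f p = 1 := by
    rw [ENNReal.tsum_prod']
    simp only [hA]
    exact μ.tsum_coe
  refine ⟨⟨f, htot ▸ ENNReal.summable.hasSum⟩, ⟨hA, hB⟩, ?_⟩
  intro s s'' hpos
  have hne : f (s, s'') ≠ 0 := hpos.ne'
  rw [hf] at hne
  simp only [ne_eq, ENNReal.tsum_eq_zero, not_forall] at hne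
  obtain ⟨s', hterm⟩ := hne
  have h1 : w₁ (s, s') ≠ 0 := fun h => hterm (by simp [h])
  have h2 : w₂ (s', s'') ≠ 0 := fun h => hterm (by simp [h])
  exact ⟨s', hs₁ s s' (pos_iff_ne_zero.mpr h1), hs₂ s' s'' (pos_iff_ne_zero.mpr h2)⟩
end

section
/- In a Markov chain on a finite (or countable) state space with an absorbing state v_err, if every state reachable from the initial state can reach v_err (i.e., Post*(v₀) ⊆ Pre*(v_err)) and the state space reachable from v₀ is finite, then the probability of eventually reaching v_err from v₀ is 1. -/
open scoped ENNReal

/-!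
From every state of the finite set `Post*(v₀)` the target is hit with positive probability
within some common number `N` of steps, so the probability of avoiding it for `N` steps is
at most some `A < 1` uniformly on `Post*(v₀)`. Since the chain never leaves `Post*(v₀)`,
avoiding the target for `k N` steps has probability at most `A ^ k → 0`.
-/

/-- `reachProb P verr n v` is the probability, in the Markov chain with transition
function `P`, of reaching `verr` from `v` within `n` steps.  The probability of the
event `◇ verr` of eventually visiting `verr` is the supremum of these quantities. -/
noncomputable def reachProb {V : Type*} [DecidableEq V] (P : V → PMF V) (verr : V) :
    ℕ → V → ℝ≥0∞
  | 0, v => if v = verr then 1 else 0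
  | n + 1, v => if v = verr then 1 else ∑' v', P v v' * reachProb P verr n v'

noncomputable def avoidProb {V : Type*} [DecidableEq V] (P : V → PMF V) (verr : V) :
    ℕ → V → ℝ≥0∞
  | 0, v => if v = verr then 0 else 1
  | n + 1, v => if v = verr then 0 else ∑' v', P v v' * avoidProb P verr n v'

section

variable {V : Type*} [DecidableEq V] (P : V → PMF V) (verr : V)

@[simp]
lemma avoidProb_self (n : ℕ) : avoidProb P verr n verr = 0 := by
  cases n <;> simp [avoidProb]

lemma reachProb_add_avoidProb (n : ℕ) (v : V) :
    reachProb P verr n v + avoidProb P verr n v = 1 := by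
  induction n generalizing v with
  | zero => by_cases h : v = verr <;> simp [reachProb, avoidProb, h]
  | succ n ih =>
    by_cases h : v = verr
    · simp [reachProb, avoidProb, h]
    · simp only [reachProb, avoidProb, if_neg h, ← ENNReal.tsum_add, ← mul_add, ih, mul_one]
      exact (P v).tsum_coe

lemma reachProb_le_one (n : ℕ) (v : V) : reachProb P verr n v ≤ 1 :=
  reachProb_add_avoidProb P verr n v ▸ le_self_add

lemma avoidProb_le_one (n : ℕ) (v : V) : avoidProb P verr n v ≤ 1 :=
  reachProb_add_avoidProb P verr n v ▸ le_add_self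

lemma avoidProb_eq_one_sub (n : ℕ) (v : V) :
    avoidProb P verr n v = 1 - reachProb P verr n v :=
  ENNReal.eq_sub_of_add_eq' ENNReal.one_ne_top
    ((add_comm _ _).trans (reachProb_add_avoidProb P verr n v))

lemma avoidProb_lt_one_of_reachProb_pos {n : ℕ} {v : V} (h : 0 < reachProb P verr n v) :
    avoidProb P verr n v < 1 := by
  rw [avoidProb_eq_one_sub]
  exact ENNReal.sub_lt_self ENNReal.one_ne_top one_ne_zero h.ne'

lemma monotone_reachProb (v : V) : Monotone (reachProb P verr · v) := by
  refine monotone_nat_of_le_succ fun n => ?_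
  induction n generalizing v with
  | zero => by_cases h : v = verr <;> simp [reachProb, h]
  | succ n ih =>
    by_cases h : v = verr
    · simp [reachProb, h]
    · simp only [reachProb, if_neg h]
      exact ENNReal.tsum_le_tsum fun v' => mul_le_mul_right (ih v') _

lemma exists_reachProb_pos {v : V}
    (h : Relation.ReflTransGen (fun a b => P a b ≠ 0) v verr) :
    ∃ n, 0 < reachProb P verr n v := by
  induction h using Relation.ReflTransGen.head_induction_on with
  | refl => exact ⟨0, by simp [reachProb]⟩
  | @head a c hac _ ih =>
    obtain ⟨n, hn⟩ := ih
    refine ⟨n + 1, ?_⟩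
    by_cases h : a = verr
    · simp [reachProb, h]
    · simp only [reachProb, if_neg h]
      exact (ENNReal.mul_pos hac hn.ne').trans_le (ENNReal.le_tsum c)

lemma Set.Finite.exists_avoidProb_le_lt_one {S : Set V} (hS : S.Finite)
    (hpos : ∀ v ∈ S, ∃ n, 0 < reachProb P verr n v) :
    ∃ N, ∃ A < 1, ∀ v ∈ S, avoidProb P verr N v ≤ A := by
  choose! f hf using hpos
  set N := hS.toFinset.sup f
  have hposN : ∀ v ∈ S, 0 < reachProb P verr N v := fun v hv =>
    (hf v hv).trans_le (monotone_reachProb P verr v (Finset.le_sup (hS.mem_toFinset.2 hv)))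
  refine ⟨N, hS.toFinset.sup (avoidProb P verr N), ?_, fun v hv => ?_⟩
  · refine (Finset.sup_lt_iff zero_lt_one).2 fun v hv => ?_
    exact avoidProb_lt_one_of_reachProb_pos P verr (hposN v (hS.mem_toFinset.1 hv))
  · exact Finset.le_sup (f := avoidProb P verr N) (hS.mem_toFinset.2 hv)

variable {P verr}

lemma avoidProb_add_le {S : Set V} (hS : ∀ v ∈ S, ∀ v', P v v' ≠ 0 → v' ∈ S)
    {m : ℕ} {A : ℝ≥0∞} (hA : ∀ v ∈ S, avoidProb P verr m v ≤ A) (n : ℕ) :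
    ∀ v ∈ S, avoidProb P verr (n + m) v ≤ avoidProb P verr n v * A := by
  induction n with
  | zero =>
    intro v hv
    by_cases h : v = verr
    · simp [h]
    · simpa [avoidProb, h] using hA v hv
  | succ n ih =>
    intro v hv
    by_cases h : v = verr
    · simp [h]
    · rw [Nat.add_right_comm]
      simp only [avoidProb, if_neg h, ← ENNReal.tsum_mul_right]
      refine ENNReal.tsum_le_tsum fun v' => ?_
      by_cases hv' : P v v' = 0
      · simp [hv']
      · rw [mul_assoc]
        exact mul_le_mul_right (ih v' (hS v hv v' hv')) _

lemma avoidProb_mul_le_pow {S : Set V} (hS : ∀ v ∈ S, ∀ v', P v v' ≠ 0 → v' ∈ S)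
    {m : ℕ} {A : ℝ≥0∞} (hA : ∀ v ∈ S, avoidProb P verr m v ≤ A) {v : V} (hv : v ∈ S)
    (k : ℕ) : avoidProb P verr (k * m) v ≤ A ^ k := by
  induction k with
  | zero => simpa using avoidProb_le_one P verr 0 v
  | succ k ih =>
    calc avoidProb P verr ((k + 1) * m) v ≤ avoidProb P verr (k * m) v * A := by
          rw [Nat.succ_mul]; exact avoidProb_add_le hS hA (k * m) v hv
      _ ≤ A ^ (k + 1) := by rw [pow_succ]; gcongr

lemma iSup_reachProb_eq_one_of_avoidProb_le_pow {v : V} {m : ℕ} {A : ℝ≥0∞} (hA : A < 1)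
    (h : ∀ k, avoidProb P verr (k * m) v ≤ A ^ k) :
    ⨆ n, reachProb P verr n v = 1 := by
  refine le_antisymm (iSup_le fun n => reachProb_le_one P verr n v) ?_
  have hle : ∀ k, 1 ≤ (⨆ n, reachProb P verr n v) + A ^ k := fun k =>
    (reachProb_add_avoidProb P verr (k * m) v).ge.trans
      (add_le_add (le_iSup (reachProb P verr · v) (k * m)) (h k))
  have hlim := (ENNReal.tendsto_pow_atTop_nhds_zero_of_lt_one hA).const_add
    (⨆ n, reachProb P verr n v)
  simpa using ge_of_tendsto' hlim hle

end

theorem reach_absorbing_prob_one_general {V : Type*} [DecidableEq V]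
    (P : V → PMF V) (v₀ verr : V)
    (hfin : {v | Relation.ReflTransGen (fun a b => P a b ≠ 0) v₀ v}.Finite)
    (hreach : ∀ v, Relation.ReflTransGen (fun a b => P a b ≠ 0) v₀ v →
      Relation.ReflTransGen (fun a b => P a b ≠ 0) v verr) :
    (⨆ n, reachProb P verr n v₀) = 1 := by
  set S := {v | Relation.ReflTransGen (fun a b => P a b ≠ 0) v₀ v}
  have hclosed : ∀ v ∈ S, ∀ v', P v v' ≠ 0 → v' ∈ S := fun _ hv _ hvv' => hv.tail hvv'
  obtain ⟨N, A, hA1, hA⟩ := hfin.exists_avoidProb_le_lt_one P verr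
    fun v hv => exists_reachProb_pos P verr (hreach v hv)
  exact iSup_reachProb_eq_one_of_avoidProb_le_pow hA1
    (avoidProb_mul_le_pow hclosed hA Relation.ReflTransGen.refl)

/-- In a Markov chain with an absorbing state `verr`, if every state reachable from the
initial state `v₀` can reach `verr` (`Post*(v₀) ⊆ Pre*(verr)`) and the set of states
reachable from `v₀` is finite, then the probability of eventually reaching `verr`
from `v₀` is 1. -/
theorem reach_absorbing_prob_one {V : Type*} [DecidableEq V] [Countable V]
    (P : V → PMF V) (v₀ verr : V)
    (habs : P verr = PMF.pure verr)
    (hfin : {v | Relation.ReflTransGen (fun a b => P a b ≠ 0) v₀ v}.Finite)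
    (hreach : ∀ v, Relation.ReflTransGen (fun a b => P a b ≠ 0) v₀ v →
      Relation.ReflTransGen (fun a b => P a b ≠ 0) v verr) :
    (⨆ n, reachProb P verr n v₀) = 1 :=
  reach_absorbing_prob_one_general P v₀ verr hfin hreach
end
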